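/- arXiv:2401.02947 — 2 statements merged into one kernel-verified Lean document; each statement's English description precedes it below -/
import Mathlib

section
/- Let D be a triangulated category, (X, Y) a t-structure on D with heart H = X ∩ Y[1], and (T, F) a torsion pair in H. Then the pair (X * T[-1], (F * Y)[-1]) is again a t-structure on D, whose heart equals F * T[-1]. -/
open CategoryTheory Category Limits Pretriangulated

universe v u

namespace SMPaper

variable {C : Type u} [Category.{v} C] [Preadditive C] [HasZeroObject C] [HasShift C ℤ]
  [∀ n : ℤ, (shiftFunctor C n).Additive] [Pretriangulated C]

/-- The image of a set of objects under the `n`-th shift, closed under isomorphism. -/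
def shiftSet (S : Set C) (n : ℤ) : Set C :=
  {d | ∃ s ∈ S, Nonempty ((shiftFunctor C n).obj s ≅ d)}

/-- The extension product `A * B`: objects `d` fitting in a triangle `a → d → b → a[1]`. -/
def star (A B : Set C) : Set C :=
  {d | ∃ (a b : C) (f : a ⟶ d) (g : d ⟶ b) (h : b ⟶ (shiftFunctor C (1 : ℤ)).obj a),
    a ∈ A ∧ b ∈ B ∧ Triangle.mk f g h ∈ (distTriang C)}

/-- `Hom(A, B) = 0`. -/
def homOrth (A B : Set C) : Prop :=
  ∀ ⦃a : C⦄, a ∈ A → ∀ ⦃b : C⦄, b ∈ B → ∀ f : a ⟶ b, f = 0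

/-- Right perpendicular `S^⊥`. -/
def rPerp (S : Set C) : Set C := {d | ∀ s ∈ S, ∀ f : s ⟶ d, f = 0}

/-- Left perpendicular `^⊥S`. -/
def lPerp (S : Set C) : Set C := {d | ∀ s ∈ S, ∀ f : d ⟶ s, f = 0}

def isoClosure (S : Set C) : Set C := {d | ∃ s ∈ S, Nonempty (s ≅ d)}

/-- The extension closure of a set of objects. -/
inductive ExtClosureP (S : Set C) : C → Prop
  | of (s : C) : s ∈ S → ExtClosureP S s
  | zero (z : C) : IsZero z → ExtClosureP S z
  | iso (x y : C) : (x ≅ y) → ExtClosureP S x → ExtClosureP S y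
  | ext (a d b : C) (f : a ⟶ d) (g : d ⟶ b) (h : b ⟶ (shiftFunctor C (1 : ℤ)).obj a) :
      Triangle.mk f g h ∈ (distTriang C) → ExtClosureP S a → ExtClosureP S b → ExtClosureP S d

def extClosure (S : Set C) : Set C := {d | ExtClosureP S d}

/-- `⟨S⟩[i] * ⟨S⟩[i-1] * ⋯ * ⟨S⟩[i-n]`. -/
def prodDown (S : Set C) : ℤ → ℕ → Set C
  | i, 0 => shiftSet (extClosure S) i
  | i, n + 1 => star (shiftSet (extClosure S) i) (prodDown S (i - 1) n)

/-- `susp S = ⋃_{n ≥ 0} ⟨S⟩[n] * ⋯ * ⟨S⟩[0]`. -/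
def suspSet (S : Set C) : Set C := {d | ∃ n : ℕ, d ∈ prodDown S n n}

/-- `cosusp S = ⋃_{n ≥ 0} ⟨S⟩[0] * ⋯ * ⟨S⟩[-n]`. -/
def cosuspSet (S : Set C) : Set C := {d | ∃ n : ℕ, d ∈ prodDown S 0 n}

/-- `cosusp (S[-1]) = ⋃_{n ≥ 0} ⟨S⟩[-1] * ⋯ * ⟨S⟩[-1-n]`. -/
def cosuspNeg (S : Set C) : Set C := {d | ∃ n : ℕ, d ∈ prodDown S (-1) n}

/-- A t-structure `(X, Y)`: full (iso-closed, containing zero) subcategories with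
`Hom(X, Y) = 0`, `D = X * Y` and `X[1] ⊆ X`. -/
structure IsTStructure (X Y : Set C) : Prop where
  isoX : ∀ ⦃x y : C⦄, (x ≅ y) → x ∈ X → y ∈ X
  isoY : ∀ ⦃x y : C⦄, (x ≅ y) → x ∈ Y → y ∈ Y
  zeroX : ∀ z : C, IsZero z → z ∈ X
  zeroY : ∀ z : C, IsZero z → z ∈ Y
  hom : homOrth X Y
  gen : ∀ d : C, d ∈ star X Y
  shift : shiftSet X 1 ⊆ X

/-- A co-t-structure `(W, X)`. -/
structure IsCoTStructure (W X : Set C) : Prop where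
  isoW : ∀ ⦃x y : C⦄, (x ≅ y) → x ∈ W → y ∈ W
  isoX : ∀ ⦃x y : C⦄, (x ≅ y) → x ∈ X → y ∈ X
  zeroW : ∀ z : C, IsZero z → z ∈ W
  zeroX : ∀ z : C, IsZero z → z ∈ X
  hom : homOrth W X
  gen : ∀ d : C, d ∈ star W X
  shift : shiftSet W (-1) ⊆ W

/-- The heart `X ∩ Y[1]` of a t-structure. -/
def heart (X Y : Set C) : Set C := X ∩ shiftSet Y 1

/-- Boundedness of a torsion pair/t-structure. -/
def IsBoundedTS (X Y : Set C) : Prop :=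
  ∀ d : C, (∃ n : ℤ, d ∈ shiftSet X n) ∧ (∃ n : ℤ, d ∈ shiftSet Y n)

/-- A torsion pair `(T, F)` in the heart `H`: `Hom(T, F) = 0` and every object of `H`
is an extension of an object of `F` by an object of `T`. -/
structure IsTorsionPairIn (H T F : Set C) : Prop where
  isoT : ∀ ⦃x y : C⦄, (x ≅ y) → x ∈ T → y ∈ T
  isoF : ∀ ⦃x y : C⦄, (x ≅ y) → x ∈ F → y ∈ F
  subT : T ⊆ H
  subF : F ⊆ H
  hom : homOrth T F
  gen : H ⊆ star T F

/-- `f : x → d` is a right `S`-approximation. -/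
def IsRightApprox (S : Set C) {x d : C} (f : x ⟶ d) : Prop :=
  x ∈ S ∧ ∀ ⦃x' : C⦄, x' ∈ S → ∀ g : x' ⟶ d, ∃ h : x' ⟶ x, h ≫ f = g

/-- `f : d → x` is a left `S`-approximation. -/
def IsLeftApprox (S : Set C) {d x : C} (f : d ⟶ x) : Prop :=
  x ∈ S ∧ ∀ ⦃x' : C⦄, x' ∈ S → ∀ g : d ⟶ x', ∃ h : x ⟶ x', f ≫ h = g

def RightMinimal {x d : C} (f : x ⟶ d) : Prop :=
  ∀ β : x ⟶ x, β ≫ f = f → IsIso β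

def LeftMinimal {d x : C} (f : d ⟶ x) : Prop :=
  ∀ β : x ⟶ x, f ≫ β = f → IsIso β

def HasRightApprox (S : Set C) (d : C) : Prop := ∃ (x : C) (f : x ⟶ d), IsRightApprox S f

def HasLeftApprox (S : Set C) (d : C) : Prop := ∃ (x : C) (f : d ⟶ x), IsLeftApprox S f

def ContravariantlyFiniteIn (S A : Set C) : Prop := ∀ d ∈ A, HasRightApprox S d

def CovariantlyFiniteIn (S A : Set C) : Prop := ∀ d ∈ A, HasLeftApprox S d

/-- An orthogonal collection (semibrick). -/
structure IsOrthogonal (U : Set C) : Prop where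
  nonzero : ∀ u ∈ U, ¬ IsZero u
  hom : ∀ ⦃u v : C⦄, u ∈ U → v ∈ U → ¬ Nonempty (u ≅ v) → ∀ f : u ⟶ v, f = 0
  div : ∀ u ∈ U, ∀ f : u ⟶ u, f = 0 ∨ IsIso f

/-- An `∞`-orthogonal collection. -/
def IsInfOrthogonal (U : Set C) : Prop :=
  IsOrthogonal U ∧ ∀ ⦃u v : C⦄, u ∈ U → v ∈ U → ∀ m : ℤ, 0 < m →
    ∀ f : (shiftFunctor C m).obj u ⟶ v, f = 0

/-- A simple-minded collection. -/
def IsSMC (U : Set C) : Prop :=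
  IsInfOrthogonal U ∧ ∀ d : C, ∃ i j : ℤ, j ≤ i ∧ d ∈ prodDown U i (i - j).toNat

/-- `m` is a right mutation `∂_S(d)` of `d` with respect to `S`. -/
def IsRightMutation (S : Set C) (d m : C) : Prop :=
  (d ∈ S ∧ Nonempty (d ≅ m)) ∨
  (d ∉ S ∧ ∃ (s : C) (f : s ⟶ (shiftFunctor C (1 : ℤ)).obj d)
      (g : (shiftFunctor C (1 : ℤ)).obj d ⟶ m) (h : m ⟶ (shiftFunctor C (1 : ℤ)).obj s),
    IsRightApprox (extClosure S) f ∧ RightMinimal f ∧ Triangle.mk f g h ∈ (distTriang C))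

/-- `m` is a left mutation `∂⁻_S(d)` of `d` with respect to `S`. -/
def IsLeftMutation (S : Set C) (d m : C) : Prop :=
  (d ∈ S ∧ Nonempty (d ≅ m)) ∨
  (d ∉ S ∧ ∃ (s : C) (g : m ⟶ (shiftFunctor C (-1 : ℤ)).obj d)
      (f : (shiftFunctor C (-1 : ℤ)).obj d ⟶ s) (h : s ⟶ (shiftFunctor C (1 : ℤ)).obj m),
    IsLeftApprox (extClosure S) f ∧ LeftMinimal f ∧ Triangle.mk g f h ∈ (distTriang C))

def rightMutationSet (S U : Set C) : Set C := {m | ∃ u ∈ U, IsRightMutation S u m}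

def leftMutationSet (S U : Set C) : Set C := {m | ∃ u ∈ U, IsLeftMutation S u m}

/-- `h` is a simple object of the heart `H`. -/
def IsSimpleIn (H : Set C) (h : C) : Prop :=
  h ∈ H ∧ ¬ IsZero h ∧
    ∀ (a b : C) (f : a ⟶ h) (g : h ⟶ b) (w : b ⟶ (shiftFunctor C (1 : ℤ)).obj a),
      a ∈ H → b ∈ H → Triangle.mk f g w ∈ (distTriang C) → IsZero a ∨ IsZero b

def simplesOf (H : Set C) : Set C := {h | IsSimpleIn H h}

/-- A heart is a length category iff every object has a finite composition series, i.e.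
lies in the extension closure of the simple objects. -/
def HeartIsLength (H : Set C) : Prop := H ⊆ extClosure (simplesOf H)

/-- A bounded t-structure with length heart. -/
def IsLengthHeart (X Y : Set C) : Prop :=
  IsTStructure X Y ∧ IsBoundedTS X Y ∧ HeartIsLength (heart X Y)

/-- An `S`-mutation pair `(A, B)`. -/
def IsSMutationPair (S A B : Set C) : Prop :=
  isoClosure A =
    lPerp S ∩ rPerp S ∩ lPerp (shiftSet S (-1)) ∩ shiftSet (star (extClosure S) B) (-1) ∧
  isoClosure B =
    lPerp S ∩ rPerp S ∩ rPerp (shiftSet S 1) ∩ shiftSet (star A (extClosure S)) 1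

/-- The conditions of the SMC Setup. -/
def SMCSetup (S : Set C) : Prop :=
  CovariantlyFiniteIn (extClosure S)
    {d | ∀ s ∈ S, ∀ m : ℤ, m < 0 → ∀ f : d ⟶ (shiftFunctor C m).obj s, f = 0} ∧
  ContravariantlyFiniteIn (extClosure S)
    {d | ∀ s ∈ S, ∀ m : ℤ, 0 < m → ∀ f : (shiftFunctor C m).obj s ⟶ d, f = 0} ∧
  (∀ d : C, ∃ N : ℤ, ∀ m : ℤ, m ≤ N → ∀ s ∈ S, ∀ f : d ⟶ (shiftFunctor C m).obj s, f = 0) ∧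
  (∀ d : C, ∃ N : ℤ, ∀ m : ℤ, N ≤ m → ∀ s ∈ S, ∀ f : (shiftFunctor C m).obj s ⟶ d, f = 0)

/-- `f : p → h` is an epimorphism in the heart `H`, i.e. fits in a triangle
`a → p → h → a[1]` with `a ∈ H`. -/
def IsEpiIn (H : Set C) {p h : C} (f : p ⟶ h) : Prop :=
  ∃ (a : C) (i : a ⟶ p) (w : h ⟶ (shiftFunctor C (1 : ℤ)).obj a),
    a ∈ H ∧ Triangle.mk i f w ∈ (distTriang C)

/-- `f : h → i` is a monomorphism in the heart `H`. -/
def IsMonoIn (H : Set C) {h i : C} (f : h ⟶ i) : Prop :=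
  ∃ (b : C) (q : i ⟶ b) (w : b ⟶ (shiftFunctor C (1 : ℤ)).obj h),
    b ∈ H ∧ Triangle.mk f q w ∈ (distTriang C)

def IsProjectiveIn (H : Set C) (p : C) : Prop :=
  p ∈ H ∧ ∀ ⦃x y : C⦄ (f : x ⟶ y), x ∈ H → y ∈ H → IsEpiIn H f →
    ∀ g : p ⟶ y, ∃ l : p ⟶ x, l ≫ f = g

def IsInjectiveIn (H : Set C) (i : C) : Prop :=
  i ∈ H ∧ ∀ ⦃x y : C⦄ (f : x ⟶ y), x ∈ H → y ∈ H → IsMonoIn H f →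
    ∀ g : x ⟶ i, ∃ l : y ⟶ i, f ≫ l = g

def EnoughProjectivesIn (H : Set C) : Prop :=
  ∀ h ∈ H, ∃ (p : C) (f : p ⟶ h), IsProjectiveIn H p ∧ IsEpiIn H f

def EnoughInjectivesIn (H : Set C) : Prop :=
  ∀ h ∈ H, ∃ (i : C) (f : h ⟶ i), IsInjectiveIn H i ∧ IsMonoIn H f

set_option linter.unusedSectionVars false

/-!
The tilted aisle and coaisle are recovered from perpendicular categories:
`lPerp ((F * Y)[-1]) ⊆ X * T[-1]` and `rPerp (T ∪ X[1]) ⊆ F * Y`. A truncation triangle for `d`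
is obtained by composing the truncation `d → y` for `(X, Y)` with a map `y → e` that splits off
the torsion part of `y`, and taking the cocone. Without the octahedral axiom the cocone of a
composite cannot be compared with those of its factors; instead, membership of the cocone in
`lPerp V` is traded for a condition on `Hom(-, V)` and `Hom(-, V⟦1⟧)` that is visibly stable
under composition (and dually for the splitting map `y → e`).
-/

lemma mem_shiftSet_of_iso {S : Set C} {n : ℤ} {d d' : C} (e : d ≅ d') (h : d ∈ shiftSet S n) :
    d' ∈ shiftSet S n := by
  obtain ⟨s, hs, ⟨e'⟩⟩ := h
  exact ⟨s, hs, ⟨e' ≪≫ e⟩⟩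

lemma shift_mem_shiftSet {S : Set C} {s : C} (hs : s ∈ S) (n : ℤ) : s⟦n⟧ ∈ shiftSet S n :=
  ⟨s, hs, ⟨Iso.refl _⟩⟩

lemma mem_shiftSet_of_shift_mem {S : Set C} {d : C} {m n : ℤ} (h : m + n = 0)
    (hd : d⟦m⟧ ∈ S) : d ∈ shiftSet S n :=
  ⟨d⟦m⟧, hd, ⟨(shiftFunctorCompIsoId C m n h).app d⟩⟩

lemma shiftSet_mono {A B : Set C} (h : A ⊆ B) (n : ℤ) : shiftSet A n ⊆ shiftSet B n := by
  rintro d ⟨a, ha, e⟩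
  exact ⟨a, h ha, e⟩

lemma subset_shiftSet_shiftSet {S : Set C} {m n : ℤ} (h : m + n = 0) :
    S ⊆ shiftSet (shiftSet S m) n :=
  fun _ hs => mem_shiftSet_of_shift_mem h (shift_mem_shiftSet hs m)

lemma shiftSet_shiftSet_subset {S : Set C} (hS : ∀ ⦃x y : C⦄, (x ≅ y) → x ∈ S → y ∈ S)
    {m n : ℤ} (h : m + n = 0) : shiftSet (shiftSet S m) n ⊆ S := by
  rintro d ⟨_, ⟨s, hs, ⟨e⟩⟩, ⟨e'⟩⟩
  exact hS (((shiftFunctorCompIsoId C m n h).app s).symm ≪≫ (shiftFunctor C n).mapIso e ≪≫ e')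
    hs

lemma mem_star_of_iso {A B : Set C} {d d' : C} (e : d ≅ d') (h : d ∈ star A B) :
    d' ∈ star A B := by
  obtain ⟨a, b, f, g, w, ha, hb, hT⟩ := h
  refine ⟨a, b, f ≫ e.hom, e.inv ≫ g, w, ha, hb, isomorphic_distinguished _ hT _ ?_⟩
  exact Triangle.isoMk _ _ (Iso.refl _) e.symm (Iso.refl _)
    (by simp [Triangle.mk]) (by simp [Triangle.mk]) (by simp [Triangle.mk])

lemma star_mono {A A' B B' : Set C} (hA : A ⊆ A') (hB : B ⊆ B') : star A B ⊆ star A' B' := by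
  rintro d ⟨a, b, f, g, w, ha, hb, hT⟩
  exact ⟨a, b, f, g, w, hA ha, hB hb, hT⟩

lemma shiftSet_star_subset {A B : Set C} (n : ℤ) :
    shiftSet (star A B) n ⊆ star (shiftSet A n) (shiftSet B n) := by
  rintro d ⟨s, ⟨a, b, f, g, w, ha, hb, hT⟩, ⟨e⟩⟩
  exact mem_star_of_iso e ⟨_, _, _, _, _, shift_mem_shiftSet ha n, shift_mem_shiftSet hb n,
    Triangle.shift_distinguished _ hT n⟩

section Perp

variable {A B V : Set C}

lemma homOrth_iff_subset_lPerp : homOrth A B ↔ A ⊆ lPerp B :=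
  ⟨fun h _ ha _ hb f => h ha hb f, fun h _ ha _ hb f => h ha _ hb f⟩

lemma homOrth_iff_subset_rPerp : homOrth A B ↔ B ⊆ rPerp A :=
  ⟨fun h _ hb _ ha f => h ha hb f, fun h _ ha _ hb f => h hb _ ha f⟩

lemma lPerp_anti (h : A ⊆ B) : lPerp B ⊆ lPerp A := fun _ hd s hs => hd s (h hs)

lemma rPerp_anti (h : A ⊆ B) : rPerp B ⊆ rPerp A := fun _ hd s hs => hd s (h hs)

lemma homOrth.mono {A' B' : Set C} (h : homOrth A B) (hA : A' ⊆ A) (hB : B' ⊆ B) :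
    homOrth A' B' :=
  fun _ ha _ hb => h (hA ha) (hB hb)

lemma homOrth.union_left {A' : Set C} (h : homOrth A B) (h' : homOrth A' B) :
    homOrth (A ∪ A') B := by
  rintro a (ha | ha) b hb f
  exacts [h ha hb f, h' ha hb f]

lemma homOrth.shiftSet (h : homOrth A B) (n : ℤ) :
    homOrth (shiftSet A n) (shiftSet B n) := by
  rintro _ ⟨a, ha, ⟨e⟩⟩ _ ⟨b, hb, ⟨e'⟩⟩ f
  obtain ⟨g, hg⟩ := (shiftFunctor C n).map_surjective (e.hom ≫ f ≫ e'.inv)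
  calc f = e.inv ≫ (e.hom ≫ f ≫ e'.inv) ≫ e'.hom := by simp
    _ = 0 := by rw [← hg, h ha hb g, Functor.map_zero, zero_comp, comp_zero]

lemma homOrth_shiftSet_iff {m n : ℤ} (h : m + n = 0) :
    homOrth (shiftSet A m) B ↔ homOrth A (shiftSet B n) :=
  ⟨fun hAB => (hAB.shiftSet n).mono (subset_shiftSet_shiftSet h) subset_rfl,
    fun hAB => (hAB.shiftSet m).mono subset_rfl (subset_shiftSet_shiftSet (by omega))⟩

lemma shift_mem_lPerp_shiftSet {a : C} (ha : a ∈ lPerp B) (n : ℤ) :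
    a⟦n⟧ ∈ lPerp (shiftSet B n) :=
  homOrth_iff_subset_lPerp.1 ((homOrth_iff_subset_lPerp.2 subset_rfl).shiftSet n)
    (shift_mem_shiftSet ha n)

lemma mem_lPerp_of_distTriang {T : Triangle C} (hT : T ∈ distTriang C)
    (h₁ : T.obj₁ ∈ lPerp V) (h₃ : T.obj₃ ∈ lPerp V) : T.obj₂ ∈ lPerp V := by
  intro v hv φ
  obtain ⟨ψ, rfl⟩ := Triangle.yoneda_exact₂ T hT φ (h₁ v hv _)
  rw [h₃ v hv ψ, comp_zero]

lemma mem_rPerp_of_distTriang {T : Triangle C} (hT : T ∈ distTriang C)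
    (h₁ : T.obj₁ ∈ rPerp V) (h₃ : T.obj₃ ∈ rPerp V) : T.obj₂ ∈ rPerp V := by
  intro v hv φ
  obtain ⟨ψ, rfl⟩ := Triangle.coyoneda_exact₂ T hT φ (h₃ v hv _)
  rw [h₁ v hv ψ, zero_comp]

lemma homOrth.star_left {A' : Set C} (h : homOrth A B) (h' : homOrth A' B) :
    homOrth (star A A') B := by
  rintro d ⟨a, a', f, g, w, ha, ha', hT⟩
  exact mem_lPerp_of_distTriang hT (homOrth_iff_subset_lPerp.1 h ha)
    (homOrth_iff_subset_lPerp.1 h' ha')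

lemma homOrth.star_right {B' : Set C} (h : homOrth A B) (h' : homOrth A B') :
    homOrth A (star B B') := by
  rintro a ha d ⟨b, b', f, g, w, hb, hb', hT⟩
  exact mem_rPerp_of_distTriang hT (homOrth_iff_subset_rPerp.1 h hb)
    (homOrth_iff_subset_rPerp.1 h' hb') a ha

lemma mem_of_mem_star_of_mem_lPerp (hA : ∀ ⦃x y : C⦄, (x ≅ y) → x ∈ A → y ∈ A)
    (hAB : homOrth (shiftSet A 1) B) {d : C} (hd : d ∈ star A B) (hdB : d ∈ lPerp B) :
    d ∈ A := by
  obtain ⟨a, b, f, g, h, ha, hb, hT⟩ := hd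
  have hb0 : IsZero b := by
    rw [IsZero.iff_id_eq_zero]
    obtain ⟨k, hk⟩ : ∃ k : a⟦(1 : ℤ)⟧ ⟶ b, 𝟙 b = h ≫ k :=
      Triangle.yoneda_exact₃ _ hT (𝟙 b) ((comp_id _).trans (hdB b hb g))
    rw [hk, hAB (shift_mem_shiftSet ha 1) hb k, comp_zero]
  have : IsIso f := (Triangle.isZero₃_iff_isIso₁ _ hT).1 hb0
  exact hA (asIso f) ha

lemma mem_of_mem_star_of_mem_rPerp (hB : ∀ ⦃x y : C⦄, (x ≅ y) → x ∈ B → y ∈ B)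
    (hAB : homOrth (shiftSet A 1) B) {d : C} (hd : d ∈ star A B) (hdA : d ∈ rPerp A) :
    d ∈ B := by
  obtain ⟨a, b, f, g, h, ha, hb, hT⟩ := hd
  have hf : f = 0 := hdA a ha f
  obtain ⟨k, hk⟩ : ∃ k : a⟦(1 : ℤ)⟧ ⟶ b, 𝟙 _ = k ≫ h :=
    Triangle.coyoneda_exact₁ _ hT (𝟙 _) (by
      show 𝟙 _ ≫ f⟦(1 : ℤ)⟧' = 0
      rw [hf, Functor.map_zero, comp_zero])
  have hh : h = 0 := by
    rw [← comp_id h, hk, hAB (shift_mem_shiftSet ha 1) hb k, zero_comp, comp_zero]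
  have : IsIso g :=
    (Triangle.isZero₁_iff_isIso₂ _ hT).1 ((Triangle.isZero₁_iff _ hT).2 ⟨hf, hh⟩)
  exact hB (asIso g).symm hb

end Perp

section Approximation

variable {U V : Set C}

/-- For `g` in a distinguished triangle `a → d → e → a⟦1⟧` this holds iff `a ∈ lPerp V`. -/
def CoconeMemLPerp (V : Set C) {d e : C} (g : d ⟶ e) : Prop :=
  ∀ v ∈ V, (∀ ψ : d ⟶ v, ∃ ψ' : e ⟶ v, g ≫ ψ' = ψ) ∧
    ∀ χ : e ⟶ v⟦(1 : ℤ)⟧, g ≫ χ = 0 → χ = 0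

/-- For `u` in a distinguished triangle `a → d → c → a⟦1⟧` this holds iff `c ∈ rPerp U`. -/
def ConeMemRPerp (U : Set C) {a d : C} (u : a ⟶ d) : Prop :=
  ∀ s ∈ U, (∀ ψ : s ⟶ d, ∃ ψ' : s ⟶ a, ψ' ≫ u = ψ) ∧
    ∀ χ : s ⟶ a⟦(1 : ℤ)⟧, χ ≫ u⟦(1 : ℤ)⟧' = 0 → χ = 0

lemma coconeMemLPerp_of_distTriang (T : Triangle C) (hT : T ∈ distTriang C)
    (h₁ : T.obj₁ ∈ lPerp V) : CoconeMemLPerp V T.mor₂ := by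
  intro v hv
  refine ⟨fun ψ => ?_, fun χ hχ => ?_⟩
  · obtain ⟨ψ', hψ'⟩ := Triangle.yoneda_exact₂ T hT ψ (h₁ v hv _)
    exact ⟨ψ', hψ'.symm⟩
  · obtain ⟨l, rfl⟩ := Triangle.yoneda_exact₃ T hT χ hχ
    obtain ⟨k, rfl⟩ := (shiftFunctor C (1 : ℤ)).map_surjective l
    rw [h₁ v hv k, Functor.map_zero, comp_zero]

lemma CoconeMemLPerp.comp {d e e' : C} {g : d ⟶ e} {g' : e ⟶ e'} (hg : CoconeMemLPerp V g)
    (hg' : CoconeMemLPerp V g') : CoconeMemLPerp V (g ≫ g') := by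
  intro v hv
  refine ⟨fun ψ => ?_, fun χ hχ => (hg' v hv).2 χ ((hg v hv).2 _ (by rwa [← assoc]))⟩
  obtain ⟨ψ₁, rfl⟩ := (hg v hv).1 ψ
  obtain ⟨ψ₂, rfl⟩ := (hg' v hv).1 ψ₁
  exact ⟨ψ₂, assoc _ _ _⟩

lemma CoconeMemLPerp.mem_lPerp (T : Triangle C) (hT : T ∈ distTriang C)
    (hg : CoconeMemLPerp V T.mor₂) : T.obj₁ ∈ lPerp V := by
  intro v hv φ
  have hφ : T.mor₃ ≫ φ⟦(1 : ℤ)⟧' = 0 :=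
    (hg v hv).2 _ (by rw [← assoc, comp_distTriang_mor_zero₂₃ _ hT, zero_comp])
  obtain ⟨μ, hμ⟩ :
      ∃ μ : T.obj₂⟦(1 : ℤ)⟧ ⟶ v⟦(1 : ℤ)⟧, φ⟦(1 : ℤ)⟧' = (-T.mor₁⟦(1 : ℤ)⟧') ≫ μ :=
    Triangle.yoneda_exact₃ _ (rot_of_distTriang _ hT) _ hφ
  obtain ⟨ν, rfl⟩ := (shiftFunctor C (1 : ℤ)).map_surjective μ
  have : φ = -(T.mor₁ ≫ ν) := (shiftFunctor C (1 : ℤ)).map_injective (by rw [hμ]; simp)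
  obtain ⟨ν', rfl⟩ := (hg v hv).1 ν
  rw [this, ← assoc, comp_distTriang_mor_zero₁₂ _ hT, zero_comp, neg_zero]

lemma coneMemRPerp_of_distTriang (T : Triangle C) (hT : T ∈ distTriang C)
    (h₃ : T.obj₃ ∈ rPerp U) : ConeMemRPerp U T.mor₁ := by
  intro s hs
  refine ⟨fun ψ => ?_, fun χ hχ => ?_⟩
  · obtain ⟨ψ', hψ'⟩ := Triangle.coyoneda_exact₂ T hT ψ (h₃ s hs _)
    exact ⟨ψ', hψ'.symm⟩
  · obtain ⟨l, rfl⟩ := Triangle.coyoneda_exact₁ T hT χ hχ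
    rw [h₃ s hs l, zero_comp]

lemma ConeMemRPerp.comp {a b d : C} {u : a ⟶ b} {u' : b ⟶ d} (hu : ConeMemRPerp U u)
    (hu' : ConeMemRPerp U u') : ConeMemRPerp U (u ≫ u') := by
  intro s hs
  refine ⟨fun ψ => ?_, fun χ hχ => (hu s hs).2 χ ((hu' s hs).2 _ (by simpa using hχ))⟩
  obtain ⟨ψ₁, rfl⟩ := (hu' s hs).1 ψ
  obtain ⟨ψ₂, rfl⟩ := (hu s hs).1 ψ₁
  exact ⟨ψ₂, (assoc _ _ _).symm⟩

lemma ConeMemRPerp.mem_rPerp (T : Triangle C) (hT : T ∈ distTriang C)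
    (hu : ConeMemRPerp U T.mor₁) : T.obj₃ ∈ rPerp U := by
  intro s hs φ
  have hφ : φ ≫ T.mor₃ = 0 :=
    (hu s hs).2 _ (by rw [assoc, comp_distTriang_mor_zero₃₁ _ hT, comp_zero])
  obtain ⟨ψ, rfl⟩ := Triangle.coyoneda_exact₃ T hT φ hφ
  obtain ⟨ψ', rfl⟩ := (hu s hs).1 ψ
  rw [assoc, comp_distTriang_mor_zero₁₂ _ hT, comp_zero]

end Approximation

namespace IsTStructure

variable {X Y : Set C}

lemma homOrth_shiftSet_one (hXY : IsTStructure X Y) : homOrth (shiftSet X 1) Y :=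
  hXY.hom.mono hXY.shift subset_rfl

lemma lPerp_subset (hXY : IsTStructure X Y) : lPerp Y ⊆ X :=
  fun d hd => mem_of_mem_star_of_mem_lPerp hXY.isoX hXY.homOrth_shiftSet_one (hXY.gen d) hd

lemma rPerp_subset (hXY : IsTStructure X Y) : rPerp X ⊆ Y :=
  fun d hd => mem_of_mem_star_of_mem_rPerp hXY.isoY hXY.homOrth_shiftSet_one (hXY.gen d) hd

lemma shiftSet_neg_one_subset (hXY : IsTStructure X Y) : shiftSet Y (-1) ⊆ Y :=
  (homOrth_iff_subset_rPerp.1 ((homOrth_shiftSet_iff (by norm_num)).1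
    hXY.homOrth_shiftSet_one)).trans hXY.rPerp_subset

lemma rPerp_shiftSet_one_subset (hXY : IsTStructure X Y) :
    rPerp (shiftSet X 1) ⊆ shiftSet Y 1 := by
  intro d hd
  have h : homOrth X (shiftSet {d} (-1)) := (homOrth_shiftSet_iff (by norm_num)).1
    (homOrth_iff_subset_rPerp.2 (Set.singleton_subset_iff.2 hd))
  exact mem_shiftSet_of_shift_mem (m := -1) (by norm_num)
    (hXY.rPerp_subset (homOrth_iff_subset_rPerp.1 h (shift_mem_shiftSet (Set.mem_singleton d) _)))

end IsTStructure

namespace IsTorsionPairIn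

variable {X Y T F : Set C}

lemma homOrth_shiftSet_one (hXY : IsTStructure X Y) (hTF : IsTorsionPairIn (heart X Y) T F) :
    homOrth (shiftSet T 1) F :=
  (hXY.hom.shiftSet 1).mono (shiftSet_mono (fun _ ht => (hTF.subT ht).1) 1)
    (fun _ hf => (hTF.subF hf).2)

lemma heart_inter_lPerp_subset (hXY : IsTStructure X Y)
    (hTF : IsTorsionPairIn (heart X Y) T F) : heart X Y ∩ lPerp F ⊆ T :=
  fun _ hd => mem_of_mem_star_of_mem_lPerp hTF.isoT (hTF.homOrth_shiftSet_one hXY)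
    (hTF.gen hd.1) hd.2

lemma heart_inter_rPerp_subset (hXY : IsTStructure X Y)
    (hTF : IsTorsionPairIn (heart X Y) T F) : heart X Y ∩ rPerp T ⊆ F :=
  fun _ hd => mem_of_mem_star_of_mem_rPerp hTF.isoF (hTF.homOrth_shiftSet_one hXY)
    (hTF.gen hd.1) hd.2

end IsTorsionPairIn

section Tilt

variable {X Y T F : Set C}

lemma homOrth_union_shiftSet_Y (hXY : IsTStructure X Y) (hTF : IsTorsionPairIn (heart X Y) T F) :
    homOrth (T ∪ shiftSet X 1) Y :=
  hXY.hom.mono (Set.union_subset (fun _ ht => (hTF.subT ht).1) hXY.shift) subset_rfl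

lemma homOrth_union_shiftSet_F (hXY : IsTStructure X Y) (hTF : IsTorsionPairIn (heart X Y) T F) :
    homOrth (T ∪ shiftSet X 1) F :=
  hTF.hom.union_left ((hXY.hom.shiftSet 1).mono subset_rfl fun _ hf => (hTF.subF hf).2)

lemma mem_F_of_distTriang (hXY : IsTStructure X Y) (hTF : IsTorsionPairIn (heart X Y) T F)
    {x d y : C} {f : x ⟶ d} {g : d ⟶ y} {h : y ⟶ x⟦(1 : ℤ)⟧}
    (hT : Triangle.mk f g h ∈ distTriang C) (hx : x ∈ X) (hd : d ∈ rPerp (T ∪ shiftSet X 1))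
    (hy : y ∈ Y) : x ∈ F := by
  have hxU : x ∈ rPerp (T ∪ shiftSet X 1) :=
    mem_rPerp_of_distTriang (inv_rot_of_distTriang _ hT) (homOrth_iff_subset_rPerp.1
      (homOrth_union_shiftSet_Y hXY hTF) (hXY.shiftSet_neg_one_subset (shift_mem_shiftSet hy _))) hd
  refine hTF.heart_inter_rPerp_subset hXY ⟨⟨hx, ?_⟩, rPerp_anti Set.subset_union_left hxU⟩
  exact hXY.rPerp_shiftSet_one_subset (rPerp_anti Set.subset_union_right hxU)

lemma rPerp_union_shiftSet_subset (hXY : IsTStructure X Y)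
    (hTF : IsTorsionPairIn (heart X Y) T F) : rPerp (T ∪ shiftSet X 1) ⊆ star F Y := by
  intro d hd
  obtain ⟨x, y, f, g, h, hx, hy, hT⟩ := hXY.gen d
  exact ⟨x, y, f, g, h, mem_F_of_distTriang hXY hTF hT hx hd hy, hy, hT⟩

lemma F_subset_star (hXY : IsTStructure X Y) (hTF : IsTorsionPairIn (heart X Y) T F) :
    F ⊆ star F Y :=
  (homOrth_iff_subset_rPerp.1 (homOrth_union_shiftSet_F hXY hTF)).trans
    (rPerp_union_shiftSet_subset hXY hTF)

lemma Y_subset_star (hXY : IsTStructure X Y) (hTF : IsTorsionPairIn (heart X Y) T F) :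
    Y ⊆ star F Y :=
  (homOrth_iff_subset_rPerp.1 (homOrth_union_shiftSet_Y hXY hTF)).trans
    (rPerp_union_shiftSet_subset hXY hTF)

lemma shiftSet_T_subset (hXY : IsTStructure X Y) (hTF : IsTorsionPairIn (heart X Y) T F) :
    shiftSet T (-1) ⊆ Y :=
  (shiftSet_mono (fun _ ht => (hTF.subT ht).2) _).trans
    (shiftSet_shiftSet_subset hXY.isoY (by norm_num))

lemma homOrth_X_tilt (hXY : IsTStructure X Y) (hTF : IsTorsionPairIn (heart X Y) T F) :
    homOrth X (shiftSet (star F Y) (-1)) :=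
  (homOrth_shiftSet_iff (by norm_num)).1 <|
    ((homOrth_union_shiftSet_F hXY hTF).star_right (homOrth_union_shiftSet_Y hXY hTF)).mono
      Set.subset_union_right subset_rfl

lemma homOrth_shiftSet_T_tilt (hXY : IsTStructure X Y)
    (hTF : IsTorsionPairIn (heart X Y) T F) :
    homOrth (shiftSet T (-1)) (shiftSet (star F Y) (-1)) :=
  (hTF.hom.star_right (hXY.hom.mono (fun _ ht => (hTF.subT ht).1) subset_rfl)).shiftSet (-1)

lemma homOrth_tilt (hXY : IsTStructure X Y) (hTF : IsTorsionPairIn (heart X Y) T F) :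
    homOrth (star X (shiftSet T (-1))) (shiftSet (star F Y) (-1)) :=
  (homOrth_X_tilt hXY hTF).star_left (homOrth_shiftSet_T_tilt hXY hTF)

lemma lPerp_tilt_subset (hXY : IsTStructure X Y) (hTF : IsTorsionPairIn (heart X Y) T F) :
    lPerp (shiftSet (star F Y) (-1)) ⊆ star X (shiftSet T (-1)) := by
  intro d hd
  obtain ⟨x, y, f, g, h, hx, hy, hT⟩ := hXY.gen d
  have hy' : y⟦(1 : ℤ)⟧ ∈ lPerp (shiftSet (shiftSet (star F Y) (-1)) 1) :=
    shift_mem_lPerp_shiftSet (mem_lPerp_of_distTriang (rot_of_distTriang _ hT) hd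
      (homOrth_iff_subset_lPerp.1 (homOrth_X_tilt hXY hTF) (hXY.shift (shift_mem_shiftSet hx 1)))) 1
  have hsub : star F Y ⊆ shiftSet (shiftSet (star F Y) (-1)) 1 :=
    subset_shiftSet_shiftSet (by norm_num)
  have hyH : y⟦(1 : ℤ)⟧ ∈ heart X Y :=
    ⟨hXY.lPerp_subset (lPerp_anti ((Y_subset_star hXY hTF).trans hsub) hy'),
      shift_mem_shiftSet hy 1⟩
  have hyT : y⟦(1 : ℤ)⟧ ∈ T := hTF.heart_inter_lPerp_subset hXY
    ⟨hyH, lPerp_anti ((F_subset_star hXY hTF).trans hsub) hy'⟩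
  exact ⟨x, y, f, g, h, hx, mem_shiftSet_of_shift_mem (by norm_num) hyT, hT⟩

lemma shiftSet_one_subset_star (hXY : IsTStructure X Y)
    (hTF : IsTorsionPairIn (heart X Y) T F) : shiftSet Y 1 ⊆ star T (star F Y) := by
  intro d hd
  obtain ⟨x, y, α, β, γ, hx, hy, hT₁⟩ := hXY.gen d
  have hxH : x ∈ heart X Y := by
    refine ⟨hx, hXY.rPerp_shiftSet_one_subset (mem_rPerp_of_distTriang
      (inv_rot_of_distTriang _ hT₁) ?_ ?_)⟩
    · exact homOrth_iff_subset_rPerp.1 hXY.homOrth_shiftSet_one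
        (hXY.shiftSet_neg_one_subset (shift_mem_shiftSet hy _))
    · exact homOrth_iff_subset_rPerp.1 (hXY.hom.shiftSet 1) hd
  obtain ⟨t, f, i, p, q, ht, hf, hT₂⟩ := hTF.gen hxH
  obtain ⟨c, _, _, hT₃⟩ := distinguished_cocone_triangle (i ≫ α)
  have hi : ConeMemRPerp (T ∪ shiftSet X 1) i := coneMemRPerp_of_distTriang _ hT₂
    (homOrth_iff_subset_rPerp.1 (homOrth_union_shiftSet_F hXY hTF) hf)
  have hα : ConeMemRPerp (T ∪ shiftSet X 1) α := coneMemRPerp_of_distTriang _ hT₁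
    (homOrth_iff_subset_rPerp.1 (homOrth_union_shiftSet_Y hXY hTF) hy)
  exact ⟨t, c, _, _, _, ht,
    rPerp_union_shiftSet_subset hXY hTF ((hi.comp hα).mem_rPerp _ hT₃), hT₃⟩

lemma mem_star_tilt (hXY : IsTStructure X Y) (hTF : IsTorsionPairIn (heart X Y) T F) (d : C) :
    d ∈ star (star X (shiftSet T (-1))) (shiftSet (star F Y) (-1)) := by
  obtain ⟨x, y, f, g, h, hx, hy, hT₁⟩ := hXY.gen d
  obtain ⟨t, e, f', g', h', ht, he, hT₂⟩ := shiftSet_star_subset (-1)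
    (mem_shiftSet_of_shift_mem (by norm_num)
      (shiftSet_one_subset_star hXY hTF (shift_mem_shiftSet hy 1)))
  have hg : CoconeMemLPerp (shiftSet (star F Y) (-1)) (g ≫ g') :=
    (coconeMemLPerp_of_distTriang _ hT₁
      (homOrth_iff_subset_lPerp.1 (homOrth_X_tilt hXY hTF) hx)).comp
    (coconeMemLPerp_of_distTriang _ hT₂
      (homOrth_iff_subset_lPerp.1 (homOrth_shiftSet_T_tilt hXY hTF) ht))
  obtain ⟨z, k, l, hT₃⟩ := distinguished_cocone_triangle₁ (g ≫ g')
  exact ⟨z, e, k, g ≫ g', l, lPerp_tilt_subset hXY hTF (hg.mem_lPerp _ hT₃), he, hT₃⟩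

lemma X_subset_tilt (hXY : IsTStructure X Y) (hTF : IsTorsionPairIn (heart X Y) T F) :
    X ⊆ star X (shiftSet T (-1)) :=
  (homOrth_iff_subset_lPerp.1 (homOrth_X_tilt hXY hTF)).trans (lPerp_tilt_subset hXY hTF)

lemma shiftSet_tilt_subset (hXY : IsTStructure X Y) (hTF : IsTorsionPairIn (heart X Y) T F) :
    shiftSet (star X (shiftSet T (-1))) 1 ⊆ star X (shiftSet T (-1)) := by
  have h : homOrth (shiftSet (star X (shiftSet T (-1))) 1) Y :=
    (homOrth_shiftSet_iff (by norm_num)).2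
      ((homOrth_tilt hXY hTF).mono subset_rfl (shiftSet_mono (Y_subset_star hXY hTF) _))
  exact (homOrth_iff_subset_lPerp.1 h).trans (hXY.lPerp_subset.trans (X_subset_tilt hXY hTF))

lemma heart_tilt (hXY : IsTStructure X Y) (hTF : IsTorsionPairIn (heart X Y) T F) :
    heart (star X (shiftSet T (-1))) (shiftSet (star F Y) (-1)) = star F (shiftSet T (-1)) := by
  refine Set.Subset.antisymm ?_ fun d hd => ⟨?_, ?_⟩
  · rintro d ⟨⟨x, t, f, g, h, hx, ht, hT⟩, hd⟩
    have hd' : d ∈ rPerp (T ∪ shiftSet X 1) := homOrth_iff_subset_rPerp.1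
      ((homOrth_union_shiftSet_F hXY hTF).star_right (homOrth_union_shiftSet_Y hXY hTF))
      (shiftSet_shiftSet_subset (fun _ _ e => mem_star_of_iso e) (by norm_num) hd)
    exact ⟨x, t, f, g, h, mem_F_of_distTriang hXY hTF hT hx hd' (shiftSet_T_subset hXY hTF ht),
      ht, hT⟩
  · exact star_mono (fun _ hf => (hTF.subF hf).1) subset_rfl hd
  · exact subset_shiftSet_shiftSet (by norm_num)
      (star_mono subset_rfl (shiftSet_T_subset hXY hTF) hd)

end Tilt

/-- the right HRS tilt of a t-structure at a torsion pair in its heart is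
again a t-structure, with heart `F * T[-1]`. -/
theorem hrs_tilt_is_tstructure {X Y T F : Set C} (hXY : IsTStructure X Y)
    (hTF : IsTorsionPairIn (heart X Y) T F) :
    IsTStructure (star X (shiftSet T (-1))) (shiftSet (star F Y) (-1)) ∧
    heart (star X (shiftSet T (-1))) (shiftSet (star F Y) (-1)) =
      star F (shiftSet T (-1)) :=
  ⟨{ isoX := fun _ _ e h => mem_star_of_iso e h
     isoY := fun _ _ e h => mem_shiftSet_of_iso e h
     zeroX := fun _ hz => lPerp_tilt_subset hXY hTF fun _ _ f => hz.eq_of_src f 0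
     zeroY := fun z hz => mem_shiftSet_of_shift_mem (m := 1) (by norm_num)
       (rPerp_union_shiftSet_subset hXY hTF fun _ _ f =>
         ((shiftFunctor C (1 : ℤ)).map_isZero hz).eq_of_tgt f 0)
     hom := homOrth_tilt hXY hTF
     gen := mem_star_tilt hXY hTF
     shift := shiftSet_tilt_subset hXY hTF },
    heart_tilt hXY hTF⟩

end SMPaper
end

section
/- Let D be a Hom-finite Krull–Schmidt triangulated category, S an orthogonal collection in D, and d an object admitting a right ⟨S⟩-approximation. In the minimal (⟨S⟩, S^⊥)-triangle s_d →^f d →^g z_d → s_d[1] (where f is a minimal right ⟨S⟩-approximation and z_d ∈ S^⊥), the induced map Hom(s, f): Hom(s, s_d) → Hom(s, d) is an isomorphism for every s ∈ S. -/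
open CategoryTheory Category Limits Pretriangulated

universe v u

namespace SMPaper

variable {C : Type u} [Category.{v} C] [Preadditive C] [HasZeroObject C] [HasShift C ℤ]
  [∀ n : ℤ, (shiftFunctor C n).Additive] [Pretriangulated C]

/-!
Let `s ∈ S`, `x ∈ ⟨S⟩`, `y ∈ S^⊥` and `φ : s → x` nonzero. Every map `s[1] → y` extends along
`φ[1]`, by induction on `x`: for `x ∈ S` the map `φ` is an isomorphism; for an extension
`a → x → b`, either `φ` survives in `b`, or it factors through `a` and the extension along
`a[1] → x[1]` exists because `Hom(⟨S⟩, y) = 0`. Consequently the cone `c` of `φ` has no nonzero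
map to `S^⊥`. If now `φ : s → s_d` is nonzero with `φ f = 0`, then `f` factors as `s_d → c → d`;
since `Hom(c, z_d) = 0` the map `c → d` factors back through `f`, so minimality makes `s_d → c`
split mono, which its vanishing composite with `φ` contradicts. Surjectivity is the
approximation property.
-/

omit [HasZeroObject C] [HasShift C ℤ] [∀ n : ℤ, (shiftFunctor C n).Additive] [Pretriangulated C] in
lemma IsOrthogonal.isIso_of_ne_zero {S : Set C} (hS : IsOrthogonal S) {s s' : C} (hs : s ∈ S)
    (hs' : s' ∈ S) {φ : s ⟶ s'} (hφ : φ ≠ 0) : IsIso φ := by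
  obtain ⟨e⟩ : Nonempty (s ≅ s') := by
    by_contra hne
    exact hφ (hS.hom hs hs' hne φ)
  rcases hS.div s hs (φ ≫ e.inv) with h0 | _
  · exact absurd ((cancel_mono e.inv).1 (by rw [h0, zero_comp])) hφ
  · exact IsIso.of_isIso_comp_right φ e.inv

lemma ExtClosureP.hom_eq_zero {S : Set C} {x y : C} (hx : ExtClosureP S x) (hy : y ∈ rPerp S)
    (u : x ⟶ y) : u = 0 := by
  induction hx with
  | of s hs => exact hy s hs u
  | zero z hz => exact hz.eq_of_src u 0
  | iso x x' e _ ih => rw [← e.inv_hom_id_assoc u, ih (e.hom ≫ u), comp_zero]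
  | ext a x b i p v hT _ _ iha ihb =>
    obtain ⟨u', rfl⟩ : ∃ u' : b ⟶ y, u = p ≫ u' := Triangle.yoneda_exact₂ _ hT u (iha _)
    rw [ihb u', comp_zero]

lemma ExtClosureP.exists_shift_map_comp_eq {S : Set C} (hS : IsOrthogonal S) {x y : C}
    (hx : ExtClosureP S x) (hy : y ∈ rPerp S) {s : C} (hs : s ∈ S) {φ : s ⟶ x} (hφ : φ ≠ 0)
    (n : s⟦(1 : ℤ)⟧ ⟶ y) : ∃ n' : x⟦(1 : ℤ)⟧ ⟶ y, φ⟦(1 : ℤ)⟧' ≫ n' = n := by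
  induction hx generalizing s with
  | of s' hs' =>
    have := hS.isIso_of_ne_zero hs hs' hφ
    exact ⟨inv (φ⟦(1 : ℤ)⟧') ≫ n, by simp⟩
  | zero z hz => exact absurd (hz.eq_of_tgt φ 0) hφ
  | iso x x' e _ ih =>
    have hφe : φ ≫ e.inv ≠ 0 := fun h0 => hφ ((cancel_mono e.inv).1 (by rw [h0, zero_comp]))
    obtain ⟨n', rfl⟩ := ih hs hφe n
    exact ⟨e.inv⟦(1 : ℤ)⟧' ≫ n', by rw [Functor.map_comp, assoc]⟩
  | ext a x b i p v hT _ hb iha ihb =>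
    by_cases hφp : φ ≫ p = 0
    · obtain ⟨ψ, rfl⟩ : ∃ ψ : s ⟶ a, φ = ψ ≫ i := Triangle.coyoneda_exact₂ _ hT φ hφp
      obtain ⟨n', rfl⟩ := iha (φ := ψ) hs (fun h0 => hφ (by rw [h0, zero_comp])) n
      obtain ⟨n'', rfl⟩ : ∃ n'' : x⟦(1 : ℤ)⟧ ⟶ y, n' = (-i⟦(1 : ℤ)⟧') ≫ n'' :=
        Triangle.yoneda_exact₃ _ (rot_of_distTriang _ hT) n' (hb.hom_eq_zero hy _)
      exact ⟨-n'', by simp⟩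
    · obtain ⟨n', rfl⟩ := ihb hs hφp n
      exact ⟨p⟦(1 : ℤ)⟧' ≫ n', by simp⟩

lemma ExtClosureP.cone_hom_eq_zero {S : Set C} (hS : IsOrthogonal S) {x y c s : C}
    (hx : ExtClosureP S x) (hy : y ∈ rPerp S) (hs : s ∈ S) {φ : s ⟶ x} (hφ : φ ≠ 0)
    {q : x ⟶ c} {r : c ⟶ s⟦(1 : ℤ)⟧} (hT : Triangle.mk φ q r ∈ distTriang C) (m : c ⟶ y) :
    m = 0 := by
  obtain ⟨n, rfl⟩ : ∃ n : s⟦(1 : ℤ)⟧ ⟶ y, m = r ≫ n :=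
    Triangle.yoneda_exact₃ _ hT m (hx.hom_eq_zero hy _)
  obtain ⟨n', rfl⟩ := hx.exists_shift_map_comp_eq hS hy hs hφ n
  have hrφ : r ≫ φ⟦(1 : ℤ)⟧' = 0 := comp_distTriang_mor_zero₃₁ _ hT
  rw [← assoc, hrφ, zero_comp]

lemma RightMinimal.eq_zero_of_comp_eq_zero {sd d zd s c : C} {f : sd ⟶ d} {g : d ⟶ zd}
    {h : zd ⟶ sd⟦(1 : ℤ)⟧} (hT : Triangle.mk f g h ∈ distTriang C) (hmin : RightMinimal f)
    {φ : s ⟶ sd} {q : sd ⟶ c} {r : c ⟶ s⟦(1 : ℤ)⟧} (hTφ : Triangle.mk φ q r ∈ distTriang C)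
    (hφf : φ ≫ f = 0) (hc : ∀ m : c ⟶ zd, m = 0) : φ = 0 := by
  obtain ⟨f', hf'⟩ : ∃ f' : c ⟶ d, f = q ≫ f' := Triangle.yoneda_exact₂ _ hTφ f hφf
  obtain ⟨γ, hγ⟩ : ∃ γ : c ⟶ sd, f' = γ ≫ f := Triangle.coyoneda_exact₂ _ hT f' (hc _)
  have : IsIso (q ≫ γ) := hmin _ (by rw [assoc, ← hγ, ← hf'])
  have hφq : φ ≫ q = 0 := comp_distTriang_mor_zero₁₂ _ hTφ
  rw [← cancel_mono (q ≫ γ), ← assoc, hφq, zero_comp, zero_comp]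

/-- in the minimal `(⟨S⟩, S^⊥)`-triangle `s_d → d → z_d → s_d[1]` for an
orthogonal collection `S`, the map `Hom(s, f) : Hom(s, s_d) → Hom(s, d)` is an
isomorphism for every `s ∈ S`. -/
theorem hom_of_minimal_approx_bijective (k : Type*) [Field k] [Linear k C]
    [∀ x y : C, Module.Finite k (x ⟶ y)] [IsIdempotentComplete C]
    {S : Set C} (hS : IsOrthogonal S) {sd d zd : C}
    (f : sd ⟶ d) (g : d ⟶ zd) (h : zd ⟶ (shiftFunctor C (1 : ℤ)).obj sd)
    (hT : Triangle.mk f g h ∈ (distTriang C))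
    (hf : IsRightApprox (extClosure S) f) (hmin : RightMinimal f)
    (hz : zd ∈ rPerp S) :
    ∀ s ∈ S, Function.Bijective (fun φ : s ⟶ sd => φ ≫ f) := by
  intro s hs
  refine ⟨(injective_iff_map_eq_zero (Preadditive.rightComp s f)).2 fun φ hφf => ?_,
    fun u => hf.2 (ExtClosureP.of s hs) u⟩
  by_contra hφ
  obtain ⟨c, q, r, hTφ⟩ := distinguished_cocone_triangle φ
  exact hφ (hmin.eq_zero_of_comp_eq_zero hT hTφ hφf (hf.1.cone_hom_eq_zero hS hz hs hφ hTφ))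
end SMPaper
end
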